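/- Let I₁ denote the modified Bessel function of the first kind of order one, defined by the power series I₁(u) = ∑_{m=0}^∞ (1/(m!(m+1)!)) (u/2)^{2m+1}. Fix γ > 0, b ∈ ℝ and r > 0. Then, as t → ∞, t · e^{γ² t / 2} · (r/t) e^{−r²/(2t)} ∫_{γ t + b}^∞ e^{−x²/(2t)} I₁(r x / t) dx converges to (r · I₁(γ r) / γ) · e^{−b γ}. In other words, the tail probability P_r(R_t ≥ γt + b) of the zero-dimensional Bessel process started at r is asymptotically equivalent to (r I₁(γr)/γ) e^{−bγ} t^{−1} e^{−γ² t/2}. -/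

import Mathlib

/-- The modified Bessel function of the first kind of order one, defined by its
everywhere-convergent power series. -/
noncomputable def besselI1 (u : ℝ) : ℝ :=
  ∑' m : ℕ, (1 / ((Nat.factorial m : ℝ) * (Nat.factorial (m + 1) : ℝ))) * (u / 2) ^ (2 * m + 1)

open Real MeasureTheory Set Filter Topology

lemma besselI1_norm_term_le {v R : ℝ} (hvR : |v| ≤ R) (m : ℕ) :
    ‖(1 / ((Nat.factorial m : ℝ) * (Nat.factorial (m + 1) : ℝ))) * (v / 2) ^ (2 * m + 1)‖
      ≤ (R / 2) * ((R ^ 2 / 4) ^ m / (Nat.factorial m : ℝ)) := by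
  have hR0 : 0 ≤ R := le_trans (abs_nonneg v) hvR
  have hm : (0:ℝ) < (Nat.factorial m : ℝ) := by exact_mod_cast Nat.factorial_pos m
  have hm1 : (1:ℝ) ≤ (Nat.factorial (m + 1) : ℝ) := by
    exact_mod_cast Nat.one_le_iff_ne_zero.mpr (Nat.factorial_ne_zero (m + 1))
  have h1 : ‖(1 / ((Nat.factorial m : ℝ) * (Nat.factorial (m + 1) : ℝ))) * (v / 2) ^ (2 * m + 1)‖
      = (1 / ((Nat.factorial m : ℝ) * (Nat.factorial (m + 1) : ℝ))) * (|v| / 2) ^ (2 * m + 1) := by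
    have habs : |1 / ((Nat.factorial m : ℝ) * (Nat.factorial (m + 1) : ℝ))|
        = 1 / ((Nat.factorial m : ℝ) * (Nat.factorial (m + 1) : ℝ)) :=
      abs_of_pos (by positivity)
    rw [Real.norm_eq_abs, abs_mul, habs, abs_pow, abs_div, abs_two]
  rw [h1]
  have h2 : (|v| / 2) ^ (2 * m + 1) ≤ (R / 2) ^ (2 * m + 1) := by
    apply pow_le_pow_left₀ (by positivity) (by linarith)
  have h3 : (1:ℝ) / ((Nat.factorial m : ℝ) * (Nat.factorial (m + 1) : ℝ))
      ≤ 1 / (Nat.factorial m : ℝ) := by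
    apply div_le_div_of_nonneg_left one_pos.le hm
    exact le_mul_of_one_le_right hm.le hm1
  calc (1 / ((Nat.factorial m : ℝ) * (Nat.factorial (m + 1) : ℝ))) * (|v| / 2) ^ (2 * m + 1)
      ≤ (1 / (Nat.factorial m : ℝ)) * (R / 2) ^ (2 * m + 1) := by
        apply mul_le_mul h3 h2 (by positivity) (by positivity)
    _ = (R / 2) * ((R ^ 2 / 4) ^ m / (Nat.factorial m : ℝ)) := by
        rw [pow_add, pow_mul, pow_one]
        have : (R / 2) ^ 2 = R ^ 2 / 4 := by ring
        rw [this]; ring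

lemma besselI1_summable (u : ℝ) :
    Summable (fun m : ℕ =>
      (1 / ((Nat.factorial m : ℝ) * (Nat.factorial (m + 1) : ℝ))) * (u / 2) ^ (2 * m + 1)) := by
  apply Summable.of_norm_bounded
    (g := fun m => (|u| / 2) * ((|u| ^ 2 / 4) ^ m / (Nat.factorial m : ℝ)))
  · exact (Real.summable_pow_div_factorial (|u| ^ 2 / 4)).mul_left _
  · exact fun m => besselI1_norm_term_le le_rfl m

lemma besselI1_nonneg {u : ℝ} (hu : 0 ≤ u) : 0 ≤ besselI1 u := by
  apply tsum_nonneg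
  intro m
  exact mul_nonneg (by positivity) (pow_nonneg (by linarith) _)

lemma besselI1_le_exp {u : ℝ} (hu : 0 ≤ u) : besselI1 u ≤ Real.exp u := by
  have hexp : Real.exp u = ∑' n : ℕ, u ^ n / (Nat.factorial n : ℝ) := by
    rw [Real.exp_eq_exp_ℝ, NormedSpace.exp_eq_tsum_div]
  rw [besselI1, hexp]
  apply Summable.tsum_le_tsum_of_inj (fun m => 2 * m + 1)
  · intro a b hab; simp only at hab; omega
  · intro c _
    exact div_nonneg (pow_nonneg hu _) (by positivity)
  · intro m
    have hkey : ((2 * m + 1).factorial : ℝ)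
        ≤ 2 ^ (2 * m + 1) * ((Nat.factorial m : ℝ) * (Nat.factorial (m + 1) : ℝ)) := by
      have h1 : (2 * m + 1).choose m * Nat.factorial m * (2 * m + 1 - m).factorial
          = (2 * m + 1).factorial := Nat.choose_mul_factorial_mul_factorial (by omega)
      have h2 : 2 * m + 1 - m = m + 1 := by omega
      rw [h2] at h1
      have h3 : (2 * m + 1).choose m ≤ 2 ^ (2 * m + 1) := by
        calc (2 * m + 1).choose m ≤ 4 ^ m := Nat.choose_middle_le_pow m
          _ ≤ 2 ^ (2 * m + 1) := by
              rw [show (4:ℕ) = 2 ^ 2 from rfl, ← pow_mul]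
              exact Nat.pow_le_pow_right (by norm_num) (by omega)
      have h4 : (2 * m + 1).factorial
          ≤ 2 ^ (2 * m + 1) * (Nat.factorial m * Nat.factorial (m + 1)) := by
        rw [← h1]
        calc (2 * m + 1).choose m * Nat.factorial m * (m + 1).factorial
            ≤ 2 ^ (2 * m + 1) * Nat.factorial m * (m + 1).factorial := by
              exact Nat.mul_le_mul_right _ (Nat.mul_le_mul_right _ h3)
          _ = 2 ^ (2 * m + 1) * (Nat.factorial m * Nat.factorial (m + 1)) := by ring
      exact_mod_cast h4
    have hfac : (0:ℝ) < ((2 * m + 1).factorial : ℝ) := by exact_mod_cast Nat.factorial_pos _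
    have h5 : (1 / ((Nat.factorial m : ℝ) * (Nat.factorial (m + 1) : ℝ))) * (u / 2) ^ (2 * m + 1)
        = u ^ (2 * m + 1) / (2 ^ (2 * m + 1) * ((Nat.factorial m : ℝ) * (Nat.factorial (m + 1) : ℝ))) := by
      rw [div_pow]; ring
    rw [h5]
    gcongr
  · exact besselI1_summable u
  · exact Real.summable_pow_div_factorial u

lemma besselI1_continuous : Continuous besselI1 := by
  rw [continuous_iff_continuousAt]
  intro u
  set R := |u| + 1 with hR
  have hcont : ContinuousOn besselI1 (Metric.ball (0:ℝ) R) := by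
    apply continuousOn_tsum
      (u := fun m => (R / 2) * ((R ^ 2 / 4) ^ m / (Nat.factorial m : ℝ)))
    · intro m
      exact Continuous.continuousOn (by continuity)
    · exact (Real.summable_pow_div_factorial (R ^ 2 / 4)).mul_left _
    · intro m v hv
      have hvR : |v| ≤ R := by
        have : dist v 0 < R := Metric.mem_ball.mp hv
        rw [Real.dist_eq, sub_zero] at this
        linarith
      exact besselI1_norm_term_le hvR m
  exact hcont.continuousAt (Metric.isOpen_ball.mem_nhds (by
    simp only [Metric.mem_ball, Real.dist_eq, sub_zero, hR]
    linarith))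

lemma integral_Ioi_shift (f : ℝ → ℝ) (c : ℝ) :
    (∫ x in Ioi c, f x) = ∫ y in Ioi (0:ℝ), f (y + c) := by
  have key := MeasureTheory.integral_add_right_eq_self (μ := volume)
    (Set.indicator (Ioi c) f) c
  rw [← integral_indicator measurableSet_Ioi, ← integral_indicator measurableSet_Ioi, ← key]
  congr 1
  funext y
  by_cases hy : 0 < y
  · rw [Set.indicator_of_mem (by simpa using hy : y + c ∈ Ioi c),
      Set.indicator_of_mem (by simpa using hy)]
  · rw [Set.indicator_of_notMem (by simpa using hy : y + c ∉ Ioi c),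
      Set.indicator_of_notMem (by simpa using hy)]

/-- Tail asymptotics for the zero-dimensional Bessel process: for fixed `γ > 0`, `b ∈ ℝ`,
`r > 0`, as `t → ∞`,
`t e^{γ²t/2} (r/t) e^{−r²/(2t)} ∫_{γt+b}^∞ e^{−x²/(2t)} I₁(rx/t) dx → (r I₁(γr)/γ) e^{−bγ}`. -/
theorem stmt_13 (γ b r : ℝ) (hγ : 0 < γ) (hr : 0 < r) :
    Filter.Tendsto
      (fun t : ℝ =>
        t * Real.exp (γ ^ 2 * t / 2) *
          ((r / t) * Real.exp (-r ^ 2 / (2 * t)) *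
            ∫ x in Set.Ioi (γ * t + b), Real.exp (-x ^ 2 / (2 * t)) * besselI1 (r * x / t)))
      Filter.atTop (nhds (r * besselI1 (γ * r) / γ * Real.exp (-b * γ))) := by
  have hΦ : ∀ t y : ℝ, True := fun _ _ => trivial
  set Φ : ℝ → ℝ → ℝ := fun t y =>
    Real.exp (-(γ * y) - (b + y) ^ 2 / (2 * t)) * besselI1 (γ * r + r * (b + y) / t) with hΦdef
  -- Step 1: dominated convergence for the shifted integral
  have key : Tendsto (fun t => ∫ y in Ioi (0:ℝ), Φ t y) atTop
      (𝓝 (∫ y in Ioi (0:ℝ), Real.exp (-(γ * y)) * besselI1 (γ * r))) := by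
    apply tendsto_integral_filter_of_dominated_convergence
      (bound := fun y => Real.exp (r * γ + r * |b|) * Real.exp (-(γ / 2) * y))
    · -- measurability
      filter_upwards [eventually_gt_atTop (0:ℝ)] with t ht
      apply Continuous.aestronglyMeasurable
      apply Continuous.mul
      · exact Real.continuous_exp.comp (by fun_prop)
      · exact besselI1_continuous.comp (by fun_prop)
    · -- bound
      filter_upwards [eventually_ge_atTop (max (max 1 (2 * r / γ)) (|b| / γ))] with t ht
      have h1t : (1:ℝ) ≤ t := le_trans (le_trans (le_max_left _ _) (le_max_left _ _)) ht
      have h2t : 2 * r / γ ≤ t := le_trans (le_trans (le_max_right _ _) (le_max_left _ _)) ht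
      have h3t : |b| / γ ≤ t := le_trans (le_max_right _ _) ht
      have ht0 : (0:ℝ) < t := lt_of_lt_of_le one_pos h1t
      have hbγt : |b| ≤ γ * t := by
        rw [div_le_iff₀ hγ] at h3t; linarith [h3t]
      have hrt : r / t ≤ γ / 2 := by
        rw [div_le_iff₀ ht0]
        rw [div_le_iff₀ hγ] at h2t
        nlinarith
      rw [ae_restrict_iff' measurableSet_Ioi]
      refine Filter.Eventually.of_forall fun y hy => ?_
      have hy0 : (0:ℝ) < y := hy
      have harg : 0 ≤ γ * r + r * (b + y) / t := by
        have h : 0 ≤ (γ * r * t + r * (b + y)) / t :=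
          div_nonneg (by nlinarith [neg_abs_le b]) ht0.le
        have heq : (γ * r * t + r * (b + y)) / t = γ * r + r * (b + y) / t := by
          field_simp
        rwa [heq] at h
      have hb1 : besselI1 (γ * r + r * (b + y) / t) ≤ Real.exp (γ * r + r * (b + y) / t) :=
        besselI1_le_exp harg
      simp only [hΦdef]
      rw [Real.norm_eq_abs,
        abs_of_nonneg (mul_nonneg (Real.exp_pos _).le (besselI1_nonneg harg))]
      have e1 : r * b / t ≤ r * |b| := by
        have h5 : r * b / t ≤ r * |b| / t := by gcongr; exact le_abs_self b
        exact h5.trans (div_le_self (by positivity) h1t)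
      have e2 : r * y / t ≤ γ / 2 * y := by
        have h6 : r * y / t = (r / t) * y := by ring
        rw [h6]
        exact mul_le_mul_of_nonneg_right hrt hy0.le
      have hsum : r * (b + y) / t = r * b / t + r * y / t := by ring
      calc Real.exp (-(γ * y) - (b + y) ^ 2 / (2 * t)) * besselI1 (γ * r + r * (b + y) / t)
          ≤ Real.exp (-(γ * y)) * Real.exp (γ * r + r * (b + y) / t) := by
            apply mul_le_mul ?_ hb1 (besselI1_nonneg harg) (Real.exp_pos _).le
            apply Real.exp_le_exp.mpr
            have h7 : 0 ≤ (b + y) ^ 2 / (2 * t) := by positivity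
            linarith
        _ = Real.exp (-(γ * y) + (γ * r + r * (b + y) / t)) := (Real.exp_add _ _).symm
        _ ≤ Real.exp ((r * γ + r * |b|) + (-(γ / 2) * y)) := by
            apply Real.exp_le_exp.mpr
            rw [hsum]
            linarith [e1, e2]
        _ = Real.exp (r * γ + r * |b|) * Real.exp (-(γ / 2) * y) := Real.exp_add _ _
    · -- bound integrable
      exact (exp_neg_integrableOn_Ioi 0 (by positivity : (0:ℝ) < γ / 2)).const_mul _
    · -- pointwise limit
      refine Filter.Eventually.of_forall fun y => ?_
      have h2tt : Tendsto (fun t : ℝ => 2 * t) atTop atTop :=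
        Tendsto.const_mul_atTop two_pos tendsto_id
      have h1 : Tendsto (fun t : ℝ => (b + y) ^ 2 / (2 * t)) atTop (𝓝 0) :=
        Tendsto.div_atTop tendsto_const_nhds h2tt
      have h2 : Tendsto (fun t : ℝ => r * (b + y) / t) atTop (𝓝 0) :=
        Tendsto.div_atTop tendsto_const_nhds tendsto_id
      have hA : Tendsto (fun t : ℝ => -(γ * y) - (b + y) ^ 2 / (2 * t)) atTop (𝓝 (-(γ * y))) := by
        simpa using tendsto_const_nhds.sub h1
      have hB : Tendsto (fun t : ℝ => γ * r + r * (b + y) / t) atTop (𝓝 (γ * r)) := by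
        simpa using tendsto_const_nhds.add h2
      exact ((Real.continuous_exp.tendsto _).comp hA).mul
        ((besselI1_continuous.tendsto _).comp hB)
  -- Step 2: value of the limit integral
  have hI : (∫ y in Ioi (0:ℝ), Real.exp (-(γ * y)) * besselI1 (γ * r))
      = γ⁻¹ * besselI1 (γ * r) := by
    rw [MeasureTheory.integral_mul_const]
    have h := integral_comp_mul_left_Ioi (fun x => Real.exp (-x)) 0 hγ
    simp only [mul_zero, smul_eq_mul, neg_zero, Real.exp_zero] at h
    rw [integral_exp_neg_Ioi] at h
    simp only [neg_zero, Real.exp_zero, mul_one] at h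
    rw [h]
  -- Step 3: combine limits
  have hexp1 : Tendsto (fun t : ℝ => Real.exp (-r ^ 2 / (2 * t))) atTop (𝓝 1) := by
    have h2tt : Tendsto (fun t : ℝ => 2 * t) atTop atTop :=
      Tendsto.const_mul_atTop two_pos tendsto_id
    have h : Tendsto (fun t : ℝ => -r ^ 2 / (2 * t)) atTop (𝓝 0) :=
      Tendsto.div_atTop tendsto_const_nhds h2tt
    simpa [Function.comp_def] using (Real.continuous_exp.tendsto 0).comp h
  have main : Tendsto
      (fun t : ℝ => r * Real.exp (-r ^ 2 / (2 * t)) * Real.exp (-(b * γ)) *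
        ∫ y in Ioi (0:ℝ), Φ t y) atTop
      (𝓝 (r * 1 * Real.exp (-(b * γ)) * (γ⁻¹ * besselI1 (γ * r)))) := by
    exact ((tendsto_const_nhds.mul hexp1).mul tendsto_const_nhds).mul (hI ▸ key)
  have hval : r * besselI1 (γ * r) / γ * Real.exp (-b * γ)
      = r * 1 * Real.exp (-(b * γ)) * (γ⁻¹ * besselI1 (γ * r)) := by
    rw [neg_mul]; ring
  rw [hval]
  apply main.congr'
  -- Step 4: eventual equality
  filter_upwards [eventually_gt_atTop (0:ℝ)] with t ht
  have ht' : t ≠ 0 := ne_of_gt ht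
  rw [integral_Ioi_shift (fun x => Real.exp (-x ^ 2 / (2 * t)) * besselI1 (r * x / t)) (γ * t + b)]
  have hint : (∫ y in Ioi (0:ℝ),
        Real.exp (-(y + (γ * t + b)) ^ 2 / (2 * t)) * besselI1 (r * (y + (γ * t + b)) / t))
      = Real.exp (-(γ ^ 2 * t / 2)) * (Real.exp (-(b * γ)) * ∫ y in Ioi (0:ℝ), Φ t y) := by
    rw [← MeasureTheory.integral_const_mul, ← MeasureTheory.integral_const_mul]
    congr 1
    funext y
    have h1 : r * (y + (γ * t + b)) / t = γ * r + r * (b + y) / t := by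
      field_simp; ring
    have h2 : -(y + (γ * t + b)) ^ 2 / (2 * t)
        = -(γ ^ 2 * t / 2) + (-(b * γ)) + (-(γ * y) - (b + y) ^ 2 / (2 * t)) := by
      field_simp; ring
    rw [h1, h2, Real.exp_add, Real.exp_add, hΦdef]
    ring
  rw [hint]
  have hAA : Real.exp (γ ^ 2 * t / 2) * Real.exp (-(γ ^ 2 * t / 2)) = 1 := by
    rw [← Real.exp_add]; simp
  have htr : t * (r / t) = r := by field_simp
  rw [show t * Real.exp (γ ^ 2 * t / 2) * ((r / t) * Real.exp (-r ^ 2 / (2 * t)) *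
        (Real.exp (-(γ ^ 2 * t / 2)) * (Real.exp (-(b * γ)) * ∫ y in Ioi (0:ℝ), Φ t y)))
      = (Real.exp (γ ^ 2 * t / 2) * Real.exp (-(γ ^ 2 * t / 2))) * ((t * (r / t)) *
        (Real.exp (-r ^ 2 / (2 * t)) * (Real.exp (-(b * γ)) * ∫ y in Ioi (0:ℝ), Φ t y)))
      from by ring, hAA, htr, one_mul]
  ring
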